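/- Consider the repeated double auction: for t ≥ 1, D_i^{t−1}(x) := sup{r ∈ ℝ : u_i(x_i^{t−1} + x − r·g) ≥ u_i(x_i^{t−1})}, and suppose x̄^t ∈ (ℝ^J)^I and p^t ∈ ℝ^J satisfy ∑_i x̄_i^t = 0, p^t·g = 1, and p^t is a supergradient of D_i^{t−1} at x̄_i^t for every i, with x_i^t := x_i^{t−1} + x̄_i^t − (p^t·x̄_i^t)·g. Suppose Assumption G holds (each u_i upper semicontinuous, concave, u_i(x_i^0) finite, strictly increasing in direction g) and there are constants δ_i > 0 such that u_i(x + s·g) ≥ u_i(x) + δ_i·s for all s ∈ (0, r] and all x in a ball of radius r containing every x_i^t and every intermediate point x_i^{t−1} + x̄_i^t − D_i^{t−1}(x̄_i^t)·g, where every per-agent surplus D_i^{t−1}(x̄_i^t) − p^t·x̄_i^t is at most r. Then for every t ≥ 1, CS(x^t) ≤ (1/t)·∑_{i∈I} (u_i(x_i^t) − u_i(x_i^0))/δ_i, where CS(w) := sup{s ∈ ℝ : ∃ z ∈ (ℝ^J)^I with ∑_i z_i + s·g = ∑_i w_i and u_i(z_i) ≥ u_i(w_i) for all i}. -/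

import Mathlib

open scoped BigOperators
open Metric Filter

noncomputable section

/-- The inner product `p·y = ∑ j, p j * y j`. -/
def dotp {J : Type*} [Fintype J] (p y : EuclideanSpace ℝ J) : ℝ := ∑ j, p j * y j

/-- A function `u : ℝ^J → ℝ ∪ {±∞}` is concave iff its hypograph is convex. -/
def HypoConcave {J : Type*} [Fintype J] (u : EuclideanSpace ℝ J → EReal) : Prop :=
  Convex ℝ {q : EuclideanSpace ℝ J × ℝ | (q.2 : EReal) ≤ u q.1}

/-- Indifference price function `D(x) = sup {r ∈ ℝ : u(x⁰ + x − r·g) ≥ u(x⁰)}`,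
the supremum being taken in `ℝ ∪ {±∞}`. -/
def indiff {J : Type*} [Fintype J] (u : EuclideanSpace ℝ J → EReal)
    (x0 g x : EuclideanSpace ℝ J) : EReal :=
  sSup {e : EReal | ∃ r : ℝ, e = (r : EReal) ∧ u x0 ≤ u (x0 + x - r • g)}

/-- `p` is a supergradient of `D` at `xb`: `D xb` is finite and
`D x ≤ D xb + p·(x − xb)` for all `x`. -/
def IsSupergradient {J : Type*} [Fintype J] (D : EuclideanSpace ℝ J → EReal)
    (p xb : EuclideanSpace ℝ J) : Prop :=
  D xb ≠ ⊥ ∧ D xb ≠ ⊤ ∧ ∀ x, D x ≤ D xb + ((dotp p (x - xb) : ℝ) : EReal)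

/-- Optimal value `v(z)` of the perturbed market clearing problem `(P_z)`. -/
def marketValue {I J : Type*} [Fintype I] [Fintype J]
    (D : I → EuclideanSpace ℝ J → EReal) (z : EuclideanSpace ℝ J) : EReal :=
  sSup {e : EReal | ∃ x : I → EuclideanSpace ℝ J, (∑ i, x i) = z ∧ e = ∑ i, D i (x i)}

/-- Optimal value of problem `(P')`, the total consumer surplus at allocation `w`. -/
def CSval {I J : Type*} [Fintype I] [Fintype J]
    (u : I → EuclideanSpace ℝ J → EReal) (g : EuclideanSpace ℝ J)
    (w : I → EuclideanSpace ℝ J) : EReal :=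
  sSup {e : EReal | ∃ s : ℝ, e = (s : EReal) ∧ ∃ z : I → EuclideanSpace ℝ J,
    (∑ i, z i) + s • g = ∑ i, w i ∧ ∀ i, u i (w i) ≤ u i (z i)}

/-- Recession function `u^∞(y) = inf_{α>0} (u(x⁰ + α·y) − u(x⁰))/α`. -/
def recession {J : Type*} [Fintype J] (u : EuclideanSpace ℝ J → EReal)
    (x0 y : EuclideanSpace ℝ J) : EReal :=
  sInf {e : EReal | ∃ α : ℝ, 0 < α ∧ e = (u (x0 + α • y) - u x0) / (α : EReal)}

/-- Pareto efficiency of an allocation `x` with total endowment `∑ i, x i`. -/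
def ParetoEfficient {I J : Type*} [Fintype I] [Fintype J]
    (u : I → EuclideanSpace ℝ J → EReal) (x : I → EuclideanSpace ℝ J) : Prop :=
  ¬ ∃ x' : I → EuclideanSpace ℝ J, (∑ i, x' i) = (∑ i, x i) ∧
      (∀ i, u i (x i) ≤ u i (x' i)) ∧ ∃ i, u i (x i) < u i (x' i)

/-!
In each round agent `i` can trade `x̄_i` at its indifference price, which is attained by upper
semicontinuity, and buy back its surplus `D_i(x̄_i) - p·x̄_i` in numeraire; the uniform gain
turns this into a utility increase of at least `δ_i` times the surplus. So utilities increase,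
the consumer surplus does not increase along the path, and summing the supergradient
inequalities bounds the consumer surplus of each round by the total surplus of that round.
Hence `CS(x^t)` is at most the smallest, so at most the average, of the first `t` total
surpluses, and their sum telescopes to `∑_i (u_i(x_i^t) - u_i(x_i^0)) / δ_i`.
-/

open scoped InnerProductSpace

lemma EReal.coe_finset_sum {ι : Type*} (s : Finset ι) (f : ι → ℝ) :
    ((∑ i ∈ s, f i : ℝ) : EReal) = ∑ i ∈ s, (f i : EReal) :=
  map_sum (⟨⟨((↑) : ℝ → EReal), EReal.coe_zero⟩, EReal.coe_add⟩ : ℝ →+ EReal) f s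

section Agent

variable {J : Type*} [Fintype J] {u : EuclideanSpace ℝ J → EReal} {x0 g : EuclideanSpace ℝ J}

lemma dotp_eq_inner (p y : EuclideanSpace ℝ J) : dotp p y = ⟪p, y⟫_ℝ := by
  simp [dotp, PiLp.inner_apply, mul_comm]

lemma coe_le_indiff {x : EuclideanSpace ℝ J} {r : ℝ} (h : u x0 ≤ u (x0 + x - r • g)) :
    (r : EReal) ≤ indiff u x0 g x :=
  le_sSup ⟨r, rfl, h⟩

/-- A finite indifference price is attained: the set of acceptable prices is closed by upper
semicontinuity, and nonempty and bounded above because its supremum is finite. -/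
lemma indiff_attained (husc : UpperSemicontinuous u) {x : EuclideanSpace ℝ J} {d : ℝ}
    (hd : (d : EReal) = indiff u x0 g x) : u x0 ≤ u (x0 + x - d • g) := by
  set S : Set ℝ := {r | u x0 ≤ u (x0 + x - r • g)}
  have hclosed : IsClosed S :=
    (husc.isClosed_preimage (u x0)).preimage (by fun_prop)
  have hlub : IsLUB S d := by
    refine ⟨fun r hr => ?_, fun b hb => ?_⟩
    · exact_mod_cast hd ▸ coe_le_indiff (u := u) hr
    · have : (d : EReal) ≤ b :=
        hd ▸ sSup_le fun _ ⟨r, he, hr⟩ => he ▸ EReal.coe_le_coe_iff.2 (hb hr)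
      exact_mod_cast this
  have hne : S.Nonempty := by
    by_contra hempty
    have : indiff u x0 g x = ⊥ :=
      sSup_eq_bot.2 fun _ ⟨r, _, hr⟩ => absurd ⟨r, hr⟩ hempty
    exact EReal.coe_ne_bot d (hd.trans this)
  exact hlub.mem_of_isClosed hne hclosed

lemma IsSupergradient.le_add_dotp {D : EuclideanSpace ℝ J → EReal} {p xb x : EuclideanSpace ℝ J}
    {d r : ℝ} (hsg : IsSupergradient D p xb) (hd : (d : EReal) = D xb) (hr : (r : EReal) ≤ D x) :
    r ≤ d + dotp p (x - xb) := by
  have := hr.trans (hsg.2.2 x)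
  rw [← hd] at this
  exact_mod_cast this

lemma surplus_nonneg {p xb : EuclideanSpace ℝ J} {d : ℝ}
    (hsg : IsSupergradient (indiff u x0 g) p xb) (hd : (d : EReal) = indiff u x0 g xb) :
    0 ≤ d - dotp p xb := by
  have := hsg.le_add_dotp hd (coe_le_indiff (x := 0) (r := 0) (by simp))
  simp only [dotp_eq_inner, inner_sub_right, inner_zero_right] at this ⊢
  linarith

lemma add_surplus_le_of_trade {K : Set (EuclideanSpace ℝ J)} {p xb : EuclideanSpace ℝ J}
    {d δ r : ℝ} (husc : UpperSemicontinuous u) (hsg : IsSupergradient (indiff u x0 g) p xb)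
    (hd : (d : EReal) = indiff u x0 g xb) (hK : x0 + xb - d • g ∈ K) (hsurp : d - dotp p xb ≤ r)
    (hgain : ∀ s : ℝ, 0 < s → s ≤ r → ∀ w ∈ K, u w + ((δ * s : ℝ) : EReal) ≤ u (w + s • g)) :
    u x0 + ((δ * (d - dotp p xb) : ℝ) : EReal) ≤ u (x0 + xb - dotp p xb • g) := by
  have hattained := indiff_attained husc hd
  have hsplit : x0 + xb - dotp p xb • g = (x0 + xb - d • g) + (d - dotp p xb) • g := by module
  rw [hsplit]
  rcases (surplus_nonneg hsg hd).eq_or_lt with hzero | hpos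
  · simpa [← hzero] using hattained
  · exact (add_le_add_left hattained _).trans (hgain _ hpos hsurp _ hK)

end Agent

section Surplus

variable {I J : Type*} [Fintype I] [Fintype J] {u : I → EuclideanSpace ℝ J → EReal}
  {g : EuclideanSpace ℝ J}

lemma sum_trade_eq {w xb : I → EuclideanSpace ℝ J} {p : EuclideanSpace ℝ J}
    (hclear : ∑ i, xb i = 0) : ∑ i, (w i + xb i - dotp p (xb i) • g) = ∑ i, w i := by
  simp [Finset.sum_add_distrib, Finset.sum_sub_distrib, ← Finset.sum_smul, dotp_eq_inner,
    ← inner_sum, hclear]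

lemma CSval_le_of_sum_eq {w w' : I → EuclideanSpace ℝ J} (hsum : ∑ i, w' i = ∑ i, w i)
    (hu : ∀ i, u i (w i) ≤ u i (w' i)) : CSval u g w' ≤ CSval u g w :=
  sSup_le_sSup fun _ ⟨s, hs, z, hz, hzu⟩ =>
    ⟨s, hs, z, hz.trans hsum, fun i => (hu i).trans (hzu i)⟩

/-- A feasible transfer `s` of numeraire, shared equally, makes `z i - w i + (s / |I|) • g` a
trade that agent `i` accepts at price `s / |I|`. -/
lemma CSval_le_sum_surplus [Nonempty I] {w xb : I → EuclideanSpace ℝ J} {p : EuclideanSpace ℝ J}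
    {d : I → ℝ} (hclear : ∑ i, xb i = 0)
    (hsg : ∀ i, IsSupergradient (indiff (u i) (w i) g) p (xb i))
    (hd : ∀ i, (d i : EReal) = indiff (u i) (w i) g (xb i)) :
    CSval u g w ≤ ((∑ i, (d i - dotp p (xb i)) : ℝ) : EReal) := by
  refine sSup_le ?_
  rintro _ ⟨s, rfl, z, hz, hzu⟩
  have hn : (Fintype.card I : ℝ) ≠ 0 := by positivity
  set ξ : I → EuclideanSpace ℝ J := fun i => z i - w i + (s / Fintype.card I) • g
  have hξ : ∑ i, ξ i = 0 := by
    have hsn : (Fintype.card I) • ((s / Fintype.card I) • g) = s • g := by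
      rw [← Nat.cast_smul_eq_nsmul ℝ, smul_smul, mul_div_cancel₀ _ hn]
    simp only [ξ, Finset.sum_add_distrib, Finset.sum_sub_distrib, Finset.sum_const,
      Finset.card_univ, hsn, ← hz]
    abel
  have hle : ∀ i, s / Fintype.card I ≤ d i + dotp p (ξ i - xb i) := fun i => by
    have hzi : w i + ξ i - (s / Fintype.card I) • g = z i := by module
    exact (hsg i).le_add_dotp (hd i) (coe_le_indiff (hzi ▸ hzu i))
  have hsum := Finset.sum_le_sum fun i (_ : i ∈ Finset.univ) => hle i
  simp only [dotp_eq_inner, inner_sub_right, Finset.sum_add_distrib, Finset.sum_sub_distrib,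
    ← inner_sum, hξ, hclear, inner_zero_right, sub_zero, Finset.sum_const, Finset.card_univ,
    nsmul_eq_mul, mul_div_cancel₀ _ hn, add_zero] at hsum
  simp only [dotp_eq_inner, Finset.sum_sub_distrib, ← inner_sum, hclear, inner_zero_right,
    sub_zero]
  exact_mod_cast hsum

end Surplus

lemma sum_range_sum_le_of_add_mul_le {I : Type*} [Fintype I] {a v : ℕ → I → ℝ} {δ : I → ℝ}
    (hδ : ∀ i, 0 < δ i) (hav : ∀ s i, v s i + δ i * a s i ≤ v (s + 1) i) (t : ℕ) :
    ∑ s ∈ Finset.range t, ∑ i, a s i ≤ ∑ i, (v t i - v 0 i) / δ i := by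
  rw [Finset.sum_comm]
  refine Finset.sum_le_sum fun i _ => ?_
  rw [le_div_iff₀ (hδ i), Finset.sum_mul, ← Finset.sum_range_sub (fun s => v s i)]
  exact Finset.sum_le_sum fun s _ => by linarith [hav s i]

lemma le_average_of_antitone {I : Type*} [Fintype I] {Φ : ℕ → EReal} (hΦ : Antitone Φ)
    {a v : ℕ → I → ℝ} {δ : I → ℝ} (hδ : ∀ i, 0 < δ i) (hΦa : ∀ s, Φ s ≤ ((∑ i, a s i : ℝ) : EReal))
    (hav : ∀ s i, v s i + δ i * a s i ≤ v (s + 1) i) {t : ℕ} (ht : 1 ≤ t) :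
    Φ t ≤ ((1 / t * ∑ i, (v t i - v 0 i) / δ i : ℝ) : EReal) := by
  have htB : ∑ s ∈ Finset.range t, ∑ i, a s i ≤
      ∑ _s ∈ Finset.range t, 1 / (t : ℝ) * ∑ i, (v t i - v 0 i) / δ i := by
    have : (t : ℝ) ≠ 0 := by positivity
    rw [Finset.sum_const, Finset.card_range, nsmul_eq_mul, one_div, mul_inv_cancel_left₀ this]
    exact sum_range_sum_le_of_add_mul_le hδ hav t
  obtain ⟨s, hs, hsB⟩ := Finset.exists_le_of_sum_le (Finset.nonempty_range_iff.2 (by omega)) htB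
  exact (hΦ (Finset.mem_range.1 hs).le).trans ((hΦa s).trans (EReal.coe_le_coe_iff.2 hsB))

/-- Step `t` (for `t = 0, 1, 2, …`) takes the allocation `x t` to `x (t+1)` trading `xb t` at
prices `pr t`; `d t i` is the real value of the indifference price `D_i^t(x̄_i^{t+1})`. -/
theorem repeated_auction_surplus_rate_general
    {I J : Type*} [Fintype I] [Nonempty I] [Fintype J]
    (u : I → EuclideanSpace ℝ J → EReal) (g : EuclideanSpace ℝ J)
    (x : ℕ → I → EuclideanSpace ℝ J)
    (xb : ℕ → I → EuclideanSpace ℝ J)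
    (pr : ℕ → EuclideanSpace ℝ J)
    (d : ℕ → I → ℝ)
    -- Assumption G
    (husc : ∀ i, UpperSemicontinuous (u i))
    (hne_top : ∀ i w, u i w ≠ ⊤)
    (hfin0 : ∀ i, u i (x 0 i) ≠ ⊥)
    -- auction dynamics
    (hclear : ∀ t, (∑ i, xb t i) = 0)
    (hsg : ∀ t i, IsSupergradient (indiff (u i) (x t i) g) (pr t) (xb t i))
    (hd : ∀ t i, (d t i : EReal) = indiff (u i) (x t i) g (xb t i))
    (hupd : ∀ t i, x (t + 1) i = x t i + xb t i - dotp (pr t) (xb t i) • g)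
    -- the uniform-gain assumption on a ball of radius r
    (r : ℝ)
    (hyball : ∀ t i,
      x t i + xb t i - d t i • g ∈ Metric.closedBall (0 : EuclideanSpace ℝ J) r)
    (hsurp : ∀ t i, d t i - dotp (pr t) (xb t i) ≤ r)
    (δ : I → ℝ) (hδ : ∀ i, 0 < δ i)
    (hgain : ∀ i, ∀ s : ℝ, 0 < s → s ≤ r →
      ∀ w ∈ Metric.closedBall (0 : EuclideanSpace ℝ J) r,
        u i w + ((δ i * s : ℝ) : EReal) ≤ u i (w + s • g)) :
    ∀ t : ℕ, 1 ≤ t →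
      CSval u g (x t) ≤
        ((1 / (t : ℝ) : ℝ) : EReal) *
          ∑ i, (u i (x t i) - u i (x 0 i)) / ((δ i : ℝ) : EReal) := by
  intro t ht
  have hstep : ∀ t i, u i (x t i) + ((δ i * (d t i - dotp (pr t) (xb t i)) : ℝ) : EReal) ≤
      u i (x (t + 1) i) := fun t i => hupd t i ▸
    add_surplus_le_of_trade (husc i) (hsg t i) (hd t i) (hyball t i) (hsurp t i) (hgain i)
  have hmono : ∀ t i, u i (x t i) ≤ u i (x (t + 1) i) := fun t i =>
    (le_add_of_nonneg_right (EReal.coe_nonneg.2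
      (mul_nonneg (hδ i).le (surplus_nonneg (hsg t i) (hd t i))))).trans (hstep t i)
  have hfin : ∀ t i, u i (x t i) ≠ ⊥ := fun t i =>
    ne_bot_of_le_ne_bot (hfin0 i) (monotone_nat_of_le_succ (fun t => hmono t i) (Nat.zero_le t))
  set v : ℕ → I → ℝ := fun t i => (u i (x t i)).toReal
  have hv : ∀ t i, u i (x t i) = (v t i : EReal) := fun t i =>
    (EReal.coe_toReal (hne_top i _) (hfin t i)).symm
  simp_rw [hv, ← EReal.coe_sub, ← EReal.coe_div, ← EReal.coe_finset_sum, ← EReal.coe_mul]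
  refine le_average_of_antitone (Φ := fun t => CSval u g (x t)) ?_ hδ
    (fun s => CSval_le_sum_surplus (hclear s) (hsg s) (hd s)) (fun s i => ?_) ht
  · refine antitone_nat_of_succ_le fun t => CSval_le_of_sum_eq ?_ (hmono t)
    simp_rw [hupd]
    exact sum_trade_eq (hclear t)
  · have := hstep s i
    rw [hv, hv, ← EReal.coe_add] at this
    exact_mod_cast this

/-- convergence rate of the total consumer surplus in the repeated
double auction. Step `t` (for `t = 0, 1, 2, …`) takes the allocation `x t` to
`x (t+1)` trading `xb t` at prices `pr t`; `d t i` is the real value of the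
indifference price `D_i^t(x̄_i^{t+1})`. -/
theorem repeated_auction_surplus_rate
    {I J : Type*} [Fintype I] [Nonempty I] [Fintype J] [Nonempty J]
    (u : I → EuclideanSpace ℝ J → EReal) (g : EuclideanSpace ℝ J)
    (x : ℕ → I → EuclideanSpace ℝ J)
    (xb : ℕ → I → EuclideanSpace ℝ J)
    (pr : ℕ → EuclideanSpace ℝ J)
    (d : ℕ → I → ℝ)
    -- Assumption G
    (husc : ∀ i, UpperSemicontinuous (u i))
    (hconc : ∀ i, HypoConcave (u i))
    (hne_top : ∀ i w, u i w ≠ ⊤)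
    (hfin0 : ∀ i, u i (x 0 i) ≠ ⊥)
    (hmono : ∀ i, ∀ w : EuclideanSpace ℝ J, ∀ s : ℝ, u i w ≠ ⊥ → 0 < s →
      u i w < u i (w + s • g))
    -- auction dynamics
    (hclear : ∀ t, (∑ i, xb t i) = 0)
    (hpg : ∀ t, dotp (pr t) g = 1)
    (hsg : ∀ t i, IsSupergradient (indiff (u i) (x t i) g) (pr t) (xb t i))
    (hd : ∀ t i, (d t i : EReal) = indiff (u i) (x t i) g (xb t i))
    (hupd : ∀ t i, x (t + 1) i = x t i + xb t i - dotp (pr t) (xb t i) • g)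
    -- the uniform-gain assumption on a ball of radius r
    (r : ℝ) (hr : 0 < r)
    (hxball : ∀ t i, x t i ∈ Metric.closedBall (0 : EuclideanSpace ℝ J) r)
    (hyball : ∀ t i,
      x t i + xb t i - d t i • g ∈ Metric.closedBall (0 : EuclideanSpace ℝ J) r)
    (hsurp : ∀ t i, d t i - dotp (pr t) (xb t i) ≤ r)
    (δ : I → ℝ) (hδ : ∀ i, 0 < δ i)
    (hgain : ∀ i, ∀ s : ℝ, 0 < s → s ≤ r →
      ∀ w ∈ Metric.closedBall (0 : EuclideanSpace ℝ J) r,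
        u i w + ((δ i * s : ℝ) : EReal) ≤ u i (w + s • g)) :
    ∀ t : ℕ, 1 ≤ t →
      CSval u g (x t) ≤
        ((1 / (t : ℝ) : ℝ) : EReal) *
          ∑ i, (u i (x t i) - u i (x 0 i)) / ((δ i : ℝ) : EReal) :=
  repeated_auction_surplus_rate_general u g x xb pr d husc hne_top hfin0 hclear hsg hd hupd r hyball
    hsurp δ hδ hgain
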